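/- Let n ≥ 4 be even and let Φ_J = [[cos(π/n), sin(π/n), 0], [−sin(π/n), cos(π/n), 0], [0, 0, 1]]. Then for i, j ∈ {1,…,n}, the probability e_iᵀ Φ_J e_j equals zero if and only if i − j ≡ n/2 (mod n) or i − j ≡ n/2 − 1 (mod n). In particular, for each choice of e_i on Alice's side there are exactly two extremal effects on Bob's side that never occur jointly with it on the maximally entangled state. -/

import Mathlib

open Real Matrix

/-- `r_n = sqrt(sec(π/n))`. -/
noncomputable def rpoly (n : ℕ) : ℝ := Real.sqrt (1 / Real.cos (Real.pi / n))

/-- Extremal effects of the even `n`-gon model: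
`e_i = (1/2)·(r_n cos((2i−1)π/n), r_n sin((2i−1)π/n), 1)ᵀ`. -/
noncomputable def eEven (n i : ℕ) : Fin 3 → ℝ :=
  (1 / 2 : ℝ) •
    ![rpoly n * Real.cos ((2 * (i : ℝ) - 1) * Real.pi / n),
      rpoly n * Real.sin ((2 * (i : ℝ) - 1) * Real.pi / n), 1]

/-- The maximally entangled state of the bipartite even `n`-gon model:
`Φ_J = [[cos(π/n), sin(π/n), 0], [−sin(π/n), cos(π/n), 0], [0,0,1]]`. -/
noncomputable def PhiJ (n : ℕ) : Matrix (Fin 3) (Fin 3) ℝ :=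
  !![Real.cos (Real.pi / n), Real.sin (Real.pi / n), 0;
     -Real.sin (Real.pi / n), Real.cos (Real.pi / n), 0;
     0, 0, 1]

/-- Probability of local effects `E` (Alice) and `F` (Bob) on a bipartite state `Φ`:
`P_Φ(E,F) = Eᵀ Φ F`. -/
noncomputable def prob (Φ : Matrix (Fin 3) (Fin 3) ℝ) (E F : Fin 3 → ℝ) : ℝ :=
  E ⬝ᵥ Φ.mulVec F

lemma probEq (n i j : ℕ) (hn : 4 ≤ n) :
    prob (PhiJ n) (eEven n i) (eEven n j)
      = (Real.cos ((2 * ((i:ℝ) - (j:ℝ)) + 1) * (Real.pi / n)) / Real.cos (Real.pi / n) + 1) / 4 := by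
  have hn0 : (n:ℝ) ≠ 0 := by positivity
  have hθlt : Real.pi / n < Real.pi / 2 := by
    apply div_lt_div_of_pos_left Real.pi_pos (by norm_num)
    exact_mod_cast by omega
  have hθpos : 0 < Real.pi / n := by positivity
  have hcos : 0 < Real.cos (Real.pi / n) :=
    Real.cos_pos_of_mem_Ioo ⟨by linarith, hθlt⟩
  have hr2 : rpoly n * rpoly n = 1 / Real.cos (Real.pi / n) :=
    Real.mul_self_sqrt (by positivity)
  have htrig : Real.cos ((2 * ((i:ℝ) - (j:ℝ)) + 1) * (Real.pi / n))
      = Real.cos ((2 * (i:ℝ) - 1) * Real.pi / n) *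
          (Real.cos (Real.pi / n) * Real.cos ((2 * (j:ℝ) - 1) * Real.pi / n) +
            Real.sin (Real.pi / n) * Real.sin ((2 * (j:ℝ) - 1) * Real.pi / n)) +
        Real.sin ((2 * (i:ℝ) - 1) * Real.pi / n) *
          (-(Real.sin (Real.pi / n) * Real.cos ((2 * (j:ℝ) - 1) * Real.pi / n)) +
            Real.cos (Real.pi / n) * Real.sin ((2 * (j:ℝ) - 1) * Real.pi / n)) := by
    have harg : (2 * ((i:ℝ) - (j:ℝ)) + 1) * (Real.pi / n)
        = ((2 * (i:ℝ) - 1) * Real.pi / n) + (Real.pi / n - (2 * (j:ℝ) - 1) * Real.pi / n) := by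
      field_simp; ring
    rw [harg, Real.cos_add, Real.cos_sub, Real.sin_sub]; ring
  rw [htrig]
  simp only [prob, PhiJ, eEven, Matrix.mulVec, dotProduct, Fin.sum_univ_three,
    Matrix.cons_val', Matrix.cons_val_zero, Matrix.cons_val_one, Matrix.head_cons,
    Matrix.empty_val', Matrix.cons_val_fin_one, Matrix.head_fin_const,
    Matrix.of_apply, Pi.smul_apply, smul_eq_mul, Matrix.cons_val_two, Matrix.tail_cons]
  set r := rpoly n
  set a := (2 * (i:ℝ) - 1) * Real.pi / n
  set b := (2 * (j:ℝ) - 1) * Real.pi / n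
  set θ := Real.pi / n
  calc 1/2 * (r * Real.cos a) * (Real.cos θ * (1/2 * (r * Real.cos b)) + Real.sin θ * (1/2 * (r * Real.sin b)) + 0 * (1/2 * 1)) +
        1/2 * (r * Real.sin a) * (-Real.sin θ * (1/2 * (r * Real.cos b)) + Real.cos θ * (1/2 * (r * Real.sin b)) + 0 * (1/2 * 1)) +
        1/2 * 1 * (0 * (1/2 * (r * Real.cos b)) + 0 * (1/2 * (r * Real.sin b)) + 1 * (1/2 * 1))
      = (r * r) * (Real.cos a * (Real.cos θ * Real.cos b + Real.sin θ * Real.sin b) +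
          Real.sin a * (-(Real.sin θ * Real.cos b) + Real.cos θ * Real.sin b)) / 4 + 1/4 := by ring
    _ = (1 / Real.cos θ) * (Real.cos a * (Real.cos θ * Real.cos b + Real.sin θ * Real.sin b) +
          Real.sin a * (-(Real.sin θ * Real.cos b) + Real.cos θ * Real.sin b)) / 4 + 1/4 := by rw [hr2]
    _ = ((Real.cos a * (Real.cos θ * Real.cos b + Real.sin θ * Real.sin b) +
          Real.sin a * (-(Real.sin θ * Real.cos b) + Real.cos θ * Real.sin b)) / Real.cos θ + 1) / 4 := by
        ring

/-- for even `n ≥ 4` and `i, j ∈ {1,…,n}`, `e_iᵀ Φ_J e_j = 0` iff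
`i − j ≡ n/2 (mod n)` or `i − j ≡ n/2 − 1 (mod n)`: for each `e_i` on Alice's side
there are exactly two extremal effects on Bob's side that never occur jointly with it
on the maximally entangled state. -/
theorem even_gon_max_entangled_prob_zero_iff
    (n : ℕ) (hn : 4 ≤ n) (heven : Even n) :
    ∀ i ∈ Finset.Icc 1 n, ∀ j ∈ Finset.Icc 1 n,
      (prob (PhiJ n) (eEven n i) (eEven n j) = 0 ↔
        ((i : ZMod n) - (j : ZMod n) = ((n / 2 : ℕ) : ZMod n) ∨
         (i : ZMod n) - (j : ZMod n) = ((n / 2 : ℕ) : ZMod n) - 1)) := by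
  intro i _ j _
  obtain ⟨m, hm⟩ : ∃ m, n = 2 * m := by
    obtain ⟨m, hm⟩ := heven; exact ⟨m, by omega⟩
  have hm2 : n / 2 = m := by omega
  have hn0 : (n:ℝ) ≠ 0 := by positivity
  have hθlt : Real.pi / n < Real.pi / 2 := by
    apply div_lt_div_of_pos_left Real.pi_pos (by norm_num)
    exact_mod_cast by omega
  have hθpos : 0 < Real.pi / n := by positivity
  have hcos : 0 < Real.cos (Real.pi / n) :=
    Real.cos_pos_of_mem_Ioo ⟨by linarith, hθlt⟩
  set D : ℤ := (i:ℤ) - (j:ℤ) with hD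
  have hmZ : (n:ℤ) = 2 * (m:ℤ) := by exact_mod_cast hm
  have hDcast : (2 * ((i:ℝ) - (j:ℝ)) + 1) = (2 * (D:ℝ) + 1) := by push_cast [hD]; ring
  rw [probEq n i j hn, hDcast]
  set X := (2 * (D:ℝ) + 1) * (Real.pi / n) with hX
  -- step 1: zero iff cos X = cos (π - π/n)
  have step1 : (Real.cos X / Real.cos (Real.pi / n) + 1) / 4 = 0 ↔
      Real.cos X = Real.cos (Real.pi - Real.pi / n) := by
    rw [Real.cos_pi_sub]
    constructor
    · intro h
      have h1 : Real.cos X / Real.cos (Real.pi / n) = -1 := by linarith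
      have h2 := (div_eq_iff hcos.ne').mp h1
      linarith
    · intro h
      rw [h, neg_div, div_self hcos.ne']
      ring
  -- step 3 rewrites
  have hcast : ∀ a b : ℤ, (a:ℝ) * (Real.pi / n) = (b:ℝ) * (Real.pi / n) ↔ a = b := by
    intro a b
    rw [mul_left_inj' hθpos.ne', Int.cast_inj]
  have hrw1 : Real.pi - Real.pi / n = (((n:ℤ) - 1 : ℤ) : ℝ) * (Real.pi / n) := by
    push_cast
    field_simp
  have hrw2 : ∀ k : ℤ, 2 * (k:ℝ) * Real.pi + X = ((2 * k * n + (2 * D + 1) : ℤ) : ℝ) * (Real.pi / n) := by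
    intro k; rw [hX]; push_cast; field_simp
  have hrw3 : ∀ k : ℤ, 2 * (k:ℝ) * Real.pi - X = ((2 * k * n - (2 * D + 1) : ℤ) : ℝ) * (Real.pi / n) := by
    intro k; rw [hX]; push_cast; field_simp
  -- step 4: integer equivalence
  have step4 : (∃ k : ℤ, (n:ℤ) - 1 = 2 * k * n + (2 * D + 1) ∨ (n:ℤ) - 1 = 2 * k * n - (2 * D + 1))
      ↔ ((n:ℤ) ∣ D - m ∨ (n:ℤ) ∣ D - m + 1) := by
    constructor
    · rintro ⟨k, h | h⟩
      · refine Or.inr ⟨-k, mul_left_cancel₀ two_ne_zero ?_⟩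
        linear_combination -h + hmZ
      · refine Or.inl ⟨k - 1, mul_left_cancel₀ two_ne_zero ?_⟩
        linear_combination h + hmZ
    · rintro (⟨c, hc⟩ | ⟨c, hc⟩)
      · exact ⟨c + 1, Or.inr (by linear_combination 2 * hc - hmZ)⟩
      · exact ⟨-c, Or.inl (by linear_combination -2 * hc + hmZ)⟩
  -- ZMod translations
  have hz1 : ((i : ZMod n) - (j : ZMod n) = ((n / 2 : ℕ) : ZMod n)) ↔ (n:ℤ) ∣ D - m := by
    have e1 : (i : ZMod n) - (j : ZMod n) = ((D : ℤ) : ZMod n) := by push_cast [hD]; ring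
    have e2 : ((n / 2 : ℕ) : ZMod n) = ((m : ℤ) : ZMod n) := by rw [hm2]; push_cast; ring
    rw [e1, e2, ZMod.intCast_eq_intCast_iff, Int.ModEq]
    constructor
    · intro h
      exact dvd_sub_comm.mp (Int.modEq_iff_dvd.mp h)
    · intro h
      exact Int.modEq_iff_dvd.mpr (dvd_sub_comm.mp h)
  have hz2 : ((i : ZMod n) - (j : ZMod n) = ((n / 2 : ℕ) : ZMod n) - 1) ↔ (n:ℤ) ∣ D - m + 1 := by
    have e1 : (i : ZMod n) - (j : ZMod n) = ((D : ℤ) : ZMod n) := by push_cast [hD]; ring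
    have e2 : ((n / 2 : ℕ) : ZMod n) - 1 = (((m : ℤ) - 1 : ℤ) : ZMod n) := by
      rw [hm2]; push_cast; ring
    rw [e1, e2, ZMod.intCast_eq_intCast_iff]
    constructor
    · intro h
      have := Int.modEq_iff_dvd.mp h
      have h2 : ((m:ℤ) - 1) - D = -(D - m + 1) := by ring
      rw [h2] at this
      exact (dvd_neg).mp this
    · intro h
      apply Int.modEq_iff_dvd.mpr
      have h2 : ((m:ℤ) - 1) - D = -(D - m + 1) := by ring
      rw [h2]
      exact dvd_neg.mpr h
  rw [hz1, hz2, step1, Real.cos_eq_cos_iff, ← step4]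
  exact exists_congr fun k => or_congr
    (by rw [hrw1, hrw2 k, hcast]) (by rw [hrw1, hrw3 k, hcast])
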